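/- For all real β > 0 and all real Δ > 0, one has ∫_ℝ (m⁺_{β,Δ}(x) − h_β(x)) dx = 2π·e^{−2πβΔ}/(1 − e^{−2πβΔ}) and ∫_ℝ (h_β(x) − m⁻_{β,Δ}(x)) dx = 2π·e^{−2πβΔ}/(1 + e^{−2πβΔ}). -/

import Mathlib

open scoped Real

noncomputable def poissonKernelH (β x : ℝ) : ℝ := β / (β ^ 2 + x ^ 2)

noncomputable def mPlus (β Δ x : ℝ) : ℝ :=
  (β / (β ^ 2 + x ^ 2)) *
    ((Real.exp (2 * π * β * Δ) + Real.exp (-(2 * π * β * Δ)) - 2 * Real.cos (2 * π * Δ * x)) /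
      (Real.exp (π * β * Δ) - Real.exp (-(π * β * Δ))) ^ 2)

noncomputable def mMinus (β Δ x : ℝ) : ℝ :=
  (β / (β ^ 2 + x ^ 2)) *
    ((Real.exp (2 * π * β * Δ) + Real.exp (-(2 * π * β * Δ)) - 2 * Real.cos (2 * π * Δ * x)) /
      (Real.exp (π * β * Δ) + Real.exp (-(π * β * Δ))) ^ 2)

/-!
The Fourier transform of `x ↦ exp (-2π a |x|)` is `h_a / π`, so Fourier inversion gives
`∫ cos (2π t x) h_a(x) dx = π exp (-2π a |t|)`. Writing `c = πβΔ`, one has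
`m⁺ - h_β = (1 - cos (2πΔx)) h_β / (2 sinh² c)` and
`h_β - m⁻ = (1 + cos (2πΔx)) h_β / (2 cosh² c)`,
so both integrals reduce to that formula at `t = Δ`.
-/

open MeasureTheory Set Real
open scoped FourierTransform

lemma integrable_exp_neg_mul_abs {b : ℝ} (hb : 0 < b) :
    Integrable fun x : ℝ => rexp (-(b * |x|)) := by
  rw [← integrableOn_univ, ← Iic_union_Ioi (a := 0), integrableOn_union]
  constructor
  · refine (integrableOn_exp_mul_Iic hb 0).congr_fun (fun x hx => ?_) measurableSet_Iic
    rw [abs_of_nonpos hx, mul_neg, neg_neg]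
  · refine (integrableOn_exp_mul_Ioi (neg_neg_of_pos hb) 0).congr_fun (fun x hx => ?_)
      measurableSet_Ioi
    simp only [abs_of_pos (mem_Ioi.mp hx), neg_mul]

lemma fourier_exp_neg_mul_abs {b : ℝ} (hb : 0 < b) (w : ℝ) :
    𝓕 (fun x : ℝ => (rexp (-(b * |x|)) : ℂ)) w = 2 * b / (b ^ 2 + (2 * π * w) ^ 2) := by
  set θ : ℂ := 2 * π * w * Complex.I
  have hleft : ∀ x ∈ Iic (0 : ℝ),
      Complex.exp (↑(-2 * π * x * w) * Complex.I) • (rexp (-(b * |x|)) : ℂ) =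
        Complex.exp ((b - θ) * x) := by
    intro x hx
    rw [abs_of_nonpos hx, smul_eq_mul, Complex.ofReal_exp, ← Complex.exp_add]
    congr 1; simp only [θ]; push_cast; ring
  have hright : ∀ x ∈ Ioi (0 : ℝ),
      Complex.exp (↑(-2 * π * x * w) * Complex.I) • (rexp (-(b * |x|)) : ℂ) =
        Complex.exp ((-b - θ) * x) := by
    intro x hx
    rw [abs_of_pos hx, smul_eq_mul, Complex.ofReal_exp, ← Complex.exp_add]
    congr 1; simp only [θ]; push_cast; ring
  have hre₁ : 0 < ((b : ℂ) - θ).re := by simpa [θ] using hb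
  have hre₂ : ((-b : ℂ) - θ).re < 0 := by simpa [θ] using hb
  rw [Real.fourier_real_eq_integral_exp_smul, ← intervalIntegral.integral_Iic_add_Ioi
    ((integrableOn_exp_mul_complex_Iic hre₁ 0).congr_fun (fun x hx => (hleft x hx).symm)
      measurableSet_Iic)
    ((integrableOn_exp_mul_complex_Ioi hre₂ 0).congr_fun (fun x hx => (hright x hx).symm)
      measurableSet_Ioi),
    setIntegral_congr_fun measurableSet_Iic hleft, setIntegral_congr_fun measurableSet_Ioi hright,
    integral_exp_mul_complex_Iic hre₁, integral_exp_mul_complex_Ioi hre₂]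
  have h₁ : (b : ℂ) - θ ≠ 0 := fun h => by simp [h] at hre₁
  have h₂ : (b : ℂ) + θ ≠ 0 := fun h => by simpa [θ, hb.ne'] using congrArg Complex.re h
  have h₃ : (b : ℂ) ^ 2 + (2 * π * w) ^ 2 = (b - θ) * (b + θ) := by
    simp only [θ]; ring_nf; rw [Complex.I_sq]; ring
  rw [h₃, show (-b : ℂ) - θ = -(b + θ) by ring]
  simp only [Complex.ofReal_zero, mul_zero, Complex.exp_zero]
  field_simp
  ring

lemma integrable_poissonKernelH {a : ℝ} (ha : 0 < a) : Integrable (poissonKernelH a) := by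
  refine ((integrable_inv_one_add_sq.comp_mul_left' (inv_ne_zero ha.ne')).const_mul a⁻¹).congr
    (.of_forall fun x => ?_)
  simp only [poissonKernelH]
  field_simp

lemma fourier_exp_neg_two_pi_mul_abs {a : ℝ} (ha : 0 < a) :
    𝓕 (fun x : ℝ => (rexp (-(2 * π * a * |x|)) : ℂ)) =
      fun w => ((poissonKernelH a w / π : ℝ) : ℂ) := by
  ext w
  rw [fourier_exp_neg_mul_abs (by positivity), poissonKernelH]
  push_cast
  field_simp

lemma integral_cos_mul_poissonKernelH {a : ℝ} (ha : 0 < a) (t : ℝ) :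
    ∫ x, cos (2 * π * t * x) * poissonKernelH a x = π * rexp (-(2 * π * a * |t|)) := by
  set g : ℝ → ℂ := fun x => (rexp (-(2 * π * a * |x|)) : ℂ)
  have hg : Integrable g :=
    (integrable_exp_neg_mul_abs (by positivity : 0 < 2 * π * a)).ofReal (𝕜 := ℂ)
  have hFg : Integrable (𝓕 g) := by
    rw [fourier_exp_neg_two_pi_mul_abs ha]
    exact ((integrable_poissonKernelH ha).div_const π).ofReal (𝕜 := ℂ)
  have hinv := congrArg (fun f : ℝ → ℂ => (f t).re)
    ((by fun_prop : Continuous g).fourierInv_fourier_eq hg hFg)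
  simp only [g, Complex.ofReal_re] at hinv
  have hint : Integrable fun w : ℝ =>
      Complex.exp (↑(2 * π * (w * t)) * Complex.I) * ((poissonKernelH a w / π : ℝ) : ℂ) :=
    (((integrable_poissonKernelH ha).div_const π).ofReal (𝕜 := ℂ)).bdd_mul (c := 1)
      (by fun_prop)
      (.of_forall fun w => (Complex.norm_exp_ofReal_mul_I _).le)
  rw [← hinv, Real.fourierInv_eq', fourier_exp_neg_two_pi_mul_abs ha]
  simp only [Real.inner_apply, smul_eq_mul]
  rw [← RCLike.re_to_complex, ← integral_re hint, ← integral_const_mul]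
  refine integral_congr_ae (.of_forall fun x => ?_)
  simp only [RCLike.re_to_complex, Complex.re_mul_ofReal, Complex.exp_ofReal_mul_I_re]
  field_simp

lemma integrable_cos_mul_poissonKernelH {a : ℝ} (ha : 0 < a) (t : ℝ) :
    Integrable fun x => cos (2 * π * t * x) * poissonKernelH a x :=
  (integrable_poissonKernelH ha).bdd_mul (c := 1) (by fun_prop)
    (.of_forall fun x => by simpa using abs_cos_le_one _)

lemma integral_poissonKernelH {a : ℝ} (ha : 0 < a) : ∫ x, poissonKernelH a x = π := by
  simpa using integral_cos_mul_poissonKernelH ha 0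

lemma integral_one_sub_cos_mul_poissonKernelH {a : ℝ} (ha : 0 < a) (t : ℝ) :
    ∫ x, (1 - cos (2 * π * t * x)) * poissonKernelH a x =
      π * (1 - rexp (-(2 * π * a * |t|))) := by
  simp only [sub_mul, one_mul]
  rw [integral_sub (integrable_poissonKernelH ha) (integrable_cos_mul_poissonKernelH ha t),
    integral_poissonKernelH ha, integral_cos_mul_poissonKernelH ha, mul_one_sub]

lemma integral_one_add_cos_mul_poissonKernelH {a : ℝ} (ha : 0 < a) (t : ℝ) :
    ∫ x, (1 + cos (2 * π * t * x)) * poissonKernelH a x =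
      π * (1 + rexp (-(2 * π * a * |t|))) := by
  simp only [add_mul, one_mul]
  rw [integral_add (integrable_poissonKernelH ha) (integrable_cos_mul_poissonKernelH ha t),
    integral_poissonKernelH ha, integral_cos_mul_poissonKernelH ha, mul_one_add]

lemma exp_two_mul_eq_sq (c : ℝ) : rexp (2 * c) = rexp c ^ 2 := by
  rw [← exp_nat_mul]; norm_num

lemma exp_sq_sub_one_ne_zero {c : ℝ} (hc : c ≠ 0) : rexp c ^ 2 - 1 ≠ 0 := by
  rw [← exp_two_mul_eq_sq, sub_ne_zero, Ne, exp_eq_one_iff]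
  exact mul_ne_zero two_ne_zero hc

lemma mPlus_sub_poissonKernelH {β Δ : ℝ} (h : π * β * Δ ≠ 0) (x : ℝ) :
    mPlus β Δ x - poissonKernelH β x =
      (1 - cos (2 * π * Δ * x)) * poissonKernelH β x / (2 * sinh (π * β * Δ) ^ 2) := by
  have he2 := exp_sq_sub_one_ne_zero h
  have he := exp_ne_zero (π * β * Δ)
  rw [mPlus, poissonKernelH, sinh_eq, exp_neg, exp_neg, mul_assoc 2 π, mul_assoc 2 (π * β),
    exp_two_mul_eq_sq]
  generalize rexp (π * β * Δ) = e at *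
  field_simp
  ring

lemma poissonKernelH_sub_mMinus (β Δ x : ℝ) :
    poissonKernelH β x - mMinus β Δ x =
      (1 + cos (2 * π * Δ * x)) * poissonKernelH β x / (2 * cosh (π * β * Δ) ^ 2) := by
  have he := exp_pos (π * β * Δ)
  rw [mMinus, poissonKernelH, cosh_eq, exp_neg, exp_neg, mul_assoc 2 π, mul_assoc 2 (π * β),
    exp_two_mul_eq_sq]
  generalize rexp (π * β * Δ) = e at *
  field_simp
  ring

lemma pi_mul_one_sub_exp_neg_two_mul_div_two_sinh_sq {c : ℝ} (hc : c ≠ 0) :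
    π * (1 - rexp (-(2 * c))) / (2 * sinh c ^ 2) =
      2 * π * rexp (-(2 * c)) / (1 - rexp (-(2 * c))) := by
  have he2 := exp_sq_sub_one_ne_zero hc
  have he := exp_ne_zero c
  rw [sinh_eq, exp_neg, exp_neg, exp_two_mul_eq_sq]
  generalize rexp c = e at *
  field_simp

lemma pi_mul_one_add_exp_neg_two_mul_div_two_cosh_sq (c : ℝ) :
    π * (1 + rexp (-(2 * c))) / (2 * cosh c ^ 2) =
      2 * π * rexp (-(2 * c)) / (1 + rexp (-(2 * c))) := by
  have he := exp_pos c
  rw [cosh_eq, exp_neg, exp_neg, exp_two_mul_eq_sq]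
  generalize rexp c = e at *
  field_simp

theorem L1_distances (β Δ : ℝ) (hβ : 0 < β) (hΔ : 0 < Δ) :
    (∫ x : ℝ, (mPlus β Δ x - poissonKernelH β x)) =
      2 * π * Real.exp (-(2 * π * β * Δ)) / (1 - Real.exp (-(2 * π * β * Δ))) ∧
    (∫ x : ℝ, (poissonKernelH β x - mMinus β Δ x)) =
      2 * π * Real.exp (-(2 * π * β * Δ)) / (1 + Real.exp (-(2 * π * β * Δ))) := by
  have hc : π * β * Δ ≠ 0 := by positivity
  have habs : 2 * π * β * |Δ| = 2 * (π * β * Δ) := by rw [abs_of_pos hΔ]; ring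
  have hmul : 2 * π * β * Δ = 2 * (π * β * Δ) := by ring
  simp_rw [mPlus_sub_poissonKernelH hc, poissonKernelH_sub_mMinus, integral_div,
    integral_one_sub_cos_mul_poissonKernelH hβ, integral_one_add_cos_mul_poissonKernelH hβ,
    habs, hmul]
  exact ⟨pi_mul_one_sub_exp_neg_two_mul_div_two_sinh_sq hc,
    pi_mul_one_add_exp_neg_two_mul_div_two_cosh_sq _⟩
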